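/- For all integers g ≥ 1 and natural numbers m, n, every element f of V₊^{(g,m,n)} satisfies ι(f) = (−1)^n f. -/
import Mathlib


open MvPolynomial

set_option synthInstance.maxHeartbeats 1000000
set_option maxHeartbeats 2000000

noncomputable section

/-- `K = ℂ(z₁,z₂)`, the field of rational functions in two variables over `ℂ`. -/
abbrev K2 : Type := FractionRing (MvPolynomial (Fin 2) ℂ)

/-- The rational function `z₁`. -/
def z1 : K2 := algebraMap (MvPolynomial (Fin 2) ℂ) K2 (X 0)

/-- The rational function `z₂`. -/
def z2 : K2 := algebraMap (MvPolynomial (Fin 2) ℂ) K2 (X 1)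

/-- The conifold discriminant `Δ₁ = (1−432z₁)³ − 27·(432z₁)³·z₂`. -/
def Δ1 : K2 := (1 - 432 * z1) ^ 3 - 27 * (432 * z1) ^ 3 * z2

/-- The conifold discriminant `Δ₂ = 1 + 27z₂`. -/
def Δ2 : K2 := 1 + 27 * z2

/-- `V₊^{(g,m,n)}`: the ℂ-span of `z₁^{k₁}(1/432−z₁)^{k₂} z₂^n (Δ₁Δ₂)^{−(2g−2)}`
over all `k₁, k₂ ≥ 0` with `k₁+k₂ ≤ m` and `k₁−k₂ = 3n−6g+6`. -/
def Vplus (g : ℤ) (m n : ℕ) : Submodule ℂ K2 :=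
  Submodule.span ℂ
    {f : K2 | ∃ k₁ k₂ : ℕ, k₁ + k₂ ≤ m ∧ (k₁ : ℤ) - k₂ = 3 * n - 6 * g + 6 ∧
      f = z1 ^ k₁ * (1 / 432 - z1) ^ k₂ * z2 ^ n * (Δ1 * Δ2) ^ (-(2 * g - 2))}

/-- Canonical `zpow` bookkeeping: the key multiplicative identity behind the involution
symmetry, valid in any field where `432 ≠ 0`. -/
lemma zpform {F : Type*} [Field F] (a b c z : F) (h432 : (432:F) ≠ 0) (ha : a ≠ 0) (hb : b ≠ 0)
    (k₁ k₂ n : ℕ) (e : ℤ) (hk : (k₁:ℤ) - k₂ = 3*n + 3*e) :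
    b^k₁ * a^k₂ * (-((432*a)^3 * z) / (432*b)^3)^n * ((432*a)^3 * c / (432*b)^3)^e
      = (-1)^n * (a^k₁ * b^k₂ * z^n * c^e) := by
  have hA : (432*a) ≠ 0 := mul_ne_zero h432 ha
  have hB : (432*b) ≠ 0 := mul_ne_zero h432 hb
  have step1 : (-((432*a)^3 * z) / (432*b)^3)^n
      = (-1)^n * ((432*a)^(3*(n:ℤ)) * z^n * ((432*b)^(3*(n:ℤ)))⁻¹) := by
    rw [div_pow, neg_pow, mul_pow, ← pow_mul, ← pow_mul, div_eq_mul_inv]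
    rw [show (3*(n:ℤ)) = ((3*n : ℕ) : ℤ) by push_cast; ring, zpow_natCast, zpow_natCast]
    ring
  have step2 : ((432*a)^3 * c / (432*b)^3)^e
      = (432*a)^(3*e) * c^e * ((432*b)^(3*e))⁻¹ := by
    rw [div_zpow, mul_zpow, div_eq_mul_inv]
    rw [show ((432*a)^3 : F) = (432*a)^((3:ℕ):ℤ) from (zpow_natCast _ 3).symm,
        show ((432*b)^3 : F) = (432*b)^((3:ℕ):ℤ) from (zpow_natCast _ 3).symm,
        ← zpow_mul, ← zpow_mul]
    norm_num
  rw [step1, step2]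
  have hcomb : ∀ (x : F), x ≠ 0 → ∀ i j : ℤ, x^i * x^j = x^(i+j) :=
    fun x hx i j => (zpow_add₀ hx i j).symm
  have key : b^(k₁:ℤ) * a^(k₂:ℤ) * ((432*a)^(3*(n:ℤ)) * ((432*b)^(3*(n:ℤ)))⁻¹)
      * ((432*a)^(3*e) * ((432*b)^(3*e))⁻¹) = a^(k₁:ℤ) * b^(k₂:ℤ) := by
    rw [← zpow_neg, ← zpow_neg, mul_zpow, mul_zpow, mul_zpow, mul_zpow]
    calc b^(k₁:ℤ) * a^(k₂:ℤ) * (432^(3*(n:ℤ)) * a^(3*(n:ℤ)) * (432^(-(3*(n:ℤ))) * b^(-(3*(n:ℤ)))))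
        * (432^((3:ℤ)*e) * a^((3:ℤ)*e) * (432^(-((3:ℤ)*e)) * b^(-((3:ℤ)*e))))
        = (432^(3*(n:ℤ)) * 432^(-(3*(n:ℤ))) * (432^((3:ℤ)*e) * 432^(-((3:ℤ)*e))))
          * (a^(k₂:ℤ) * a^(3*(n:ℤ)) * a^((3:ℤ)*e)) * (b^(k₁:ℤ) * b^(-(3*(n:ℤ))) * b^(-((3:ℤ)*e))) := by
          ring
      _ = a^(k₁:ℤ) * b^(k₂:ℤ) := by
          rw [hcomb _ h432, hcomb _ h432, hcomb _ h432, hcomb _ ha, hcomb _ ha, hcomb _ hb,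
              hcomb _ hb]
          rw [show (3*(n:ℤ) + -(3*(n:ℤ))) = 0 by ring, show ((3:ℤ)*e + -(3*e)) = 0 by ring,
              show ((0:ℤ)+0) = 0 by ring, zpow_zero,
              show ((k₂:ℤ) + 3*n + 3*e) = (k₁:ℤ) by omega,
              show ((k₁:ℤ) + -(3*(n:ℤ)) + -(3*e)) = (k₂:ℤ) by omega]
          ring
  calc b^k₁ * a^k₂ * ((-1)^n * ((432*a)^(3*(n:ℤ)) * z^n * ((432*b)^(3*(n:ℤ)))⁻¹))
      * ((432*a)^(3*e) * c^e * ((432*b)^(3*e))⁻¹)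
      = (-1)^n * (z^n * c^e) * (b^(k₁:ℤ) * a^(k₂:ℤ) * ((432*a)^(3*(n:ℤ)) * ((432*b)^(3*(n:ℤ)))⁻¹)
        * ((432*a)^(3*e) * ((432*b)^(3*e))⁻¹)) := by rw [zpow_natCast, zpow_natCast]; ring
    _ = (-1)^n * (a^k₁ * b^k₂ * z^n * c^e) := by rw [key, zpow_natCast, zpow_natCast]; ring

lemma inj2 : Function.Injective (algebraMap (MvPolynomial (Fin 2) ℂ) K2) :=
  IsFractionRing.injective _ _

lemma amap_ne (P : MvPolynomial (Fin 2) ℂ) (s : Fin 2 → ℂ) (h : eval s P ≠ 0) :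
    algebraMap (MvPolynomial (Fin 2) ℂ) K2 P ≠ 0 := by
  intro hP
  apply h
  have : P = 0 := inj2 (by simpa using hP)
  simp [this]

lemma amap_C (q : ℂ) : algebraMap (MvPolynomial (Fin 2) ℂ) K2 (C q) = algebraMap ℂ K2 q := by
  rw [← MvPolynomial.algebraMap_eq, ← IsScalarTower.algebraMap_apply]

lemma c432 : algebraMap ℂ K2 (1/432) = (1/432 : K2) := by
  rw [map_div₀, map_one, map_ofNat]

lemma hz1ne : z1 ≠ 0 := amap_ne _ (fun _ => 1) (by simp)

lemma hbne : (1/432 - z1 : K2) ≠ 0 := by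
  have : (1/432 - z1 : K2) = algebraMap (MvPolynomial (Fin 2) ℂ) K2 (C (1/432) - X 0) := by
    rw [map_sub, amap_C, c432, z1]
  rw [this]
  exact amap_ne _ (fun _ => 0) (by norm_num)

lemma hΔ1ne : Δ1 ≠ 0 := by
  have : Δ1 = algebraMap (MvPolynomial (Fin 2) ℂ) K2
      ((1 - 432 * X 0)^3 - 27*(432 * X 0)^3 * X 1) := by
    rw [Δ1, z1, z2, map_sub, map_mul, map_mul, map_pow, map_sub, map_mul, map_pow, map_mul,
        map_one, map_ofNat, map_ofNat]
  rw [this]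
  exact amap_ne _ (fun _ => 0) (by norm_num)

lemma hΔ2ne : Δ2 ≠ 0 := by
  have : Δ2 = algebraMap (MvPolynomial (Fin 2) ℂ) K2 (1 + 27 * X 1) := by
    rw [Δ2, z2, map_add, map_mul, map_one, map_ofNat]
  rw [this]
  exact amap_ne _ (fun _ => 0) (by norm_num)

lemma h432K : (432 : K2) ≠ 0 := by
  have : (432 : K2) = algebraMap (MvPolynomial (Fin 2) ℂ) K2 432 := (map_ofNat _ _).symm
  rw [this]
  exact amap_ne _ (fun _ => 0) (by rw [map_ofNat]; norm_num)

/-- Every element `f` of `V₊^{(g,m,n)}` satisfies `ι(f) = (−1)^n f`. -/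
theorem involution_on_Vplus (ι : K2 →ₐ[ℂ] K2)
    (h1 : ι z1 = 1 / 432 - z1)
    (h2 : ι z2 = -((432 * z1) ^ 3 * z2) / (1 - 432 * z1) ^ 3)
    (g : ℤ) (hg : 1 ≤ g) (m n : ℕ) :
    ∀ f ∈ Vplus g m n, ι f = (-1 : K2) ^ n * f := by
  have hb432 : (1 - 432*z1 : K2) = 432 * (1/432 - z1) := by ring
  have hBne : (1 - 432*z1 : K2) ≠ 0 := by
    rw [hb432]; exact mul_ne_zero h432K hbne
  have iw : ι (1/432 - z1) = z1 := by
    rw [map_sub, map_div₀, map_one, map_ofNat, h1]; ring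
  have iΔ1 : ι Δ1 = (432*z1)^3 * Δ2 := by
    rw [Δ1]
    simp only [map_sub, map_mul, map_pow, map_one, map_ofNat]
    rw [h1, h2, Δ2, show (432*((1:K2)/432 - z1)) = 1 - 432*z1 by ring]
    field_simp
    ring
  have iΔ2 : ι Δ2 = Δ1 / (1 - 432*z1)^3 := by
    rw [Δ2]
    simp only [map_add, map_mul, map_one, map_ofNat]
    rw [h2, Δ1]
    field_simp
    ring
  have iΔ : ι (Δ1 * Δ2) = (432*z1)^3 * (Δ1*Δ2) / (432*(1/432 - z1))^3 := by
    rw [map_mul, iΔ1, iΔ2, ← hb432]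
    field_simp
  intro f hf
  induction hf using Submodule.span_induction with
  | mem x hx =>
    obtain ⟨k₁, k₂, _, hk, rfl⟩ := hx
    rw [map_mul, map_mul, map_mul, map_pow, map_pow, map_pow, map_zpow₀, h1, iw, h2, iΔ, hb432]
    exact zpform z1 (1/432 - z1) (Δ1*Δ2) z2 h432K hz1ne hbne k₁ k₂ n (-(2*g-2))
      (by omega)
  | zero => simp
  | add x y _ _ hx hy => rw [map_add, hx, hy]; ring
  | smul r x _ hx =>
    rw [show ι (r • x) = r • ι x from map_smul ι.toLinearMap r x, hx]
    exact (mul_smul_comm _ _ _).symm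

end
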